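/- Let t, r be independent complex random variables with ln|t| ~ N(0, δ_t²), arg t ~ U(−θ_t, θ_t), ln|r| ~ N(0, δ_r²), arg r ~ U(−θ_r, θ_r), amplitudes and phases all independent. Then E[|t − α·r|²] = e^{2δ_t²} + |α|²·e^{2δ_r²} − 2·Re(α*)·sinc(θ_t)·sinc(θ_r)·e^{(δ_t²+δ_r²)/2} for any complex α, and in particular with α = E[t/r] = E[t]·E[1/r] = sinc(θ_t)·sinc(θ_r)·e^{(δ_t²+δ_r²)/2} (using E[1/r] = sinc(θ_r)e^{δ_r²/2}), E[|t − α r|²] = e^{2δ_t²} + sinc²(θ_t)·sinc²(θ_r)·e^{δ_t²+δ_r²}·(e^{2δ_r²} − 2). -/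

import Mathlib

/-!
Expanding the square, `‖t - α r‖² = ‖t‖² + ‖α‖² ‖r‖² - 2 Re (conj α · t · conj r)`, and independence
of `t` and `r` turns the expected cross term into `conj α · E[t] · conj E[r]`. Writing
`t = ‖t‖ e^{i arg t}`, independence of amplitude and phase gives
`E[t] = E‖t‖ · E[e^{i arg t}] = e^{δ²/2} · sinc θ`, and `E‖t‖ⁿ = E[e^{n log ‖t‖}]` is the moment
generating function of the Gaussian `log ‖t‖` at `n`. That last identity needs `t ≠ 0` almost
surely (`Real.log 0 = 0`), which holds because the phase distribution has no atoms.
-/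

open MeasureTheory ProbabilityTheory

/-- The symmetric uniform distribution on `[−θ, θ]`. -/
noncomputable def unifSym (θ : ℝ) : Measure ℝ :=
  (ENNReal.ofReal (2 * θ))⁻¹ • volume.restrict (Set.Ioc (-θ) θ)

open Complex ComplexConjugate

lemma isProbabilityMeasure_unifSym {θ : ℝ} (hθ : 0 < θ) : IsProbabilityMeasure (unifSym θ) := by
  constructor
  rw [unifSym, Measure.smul_apply, Measure.restrict_apply_univ, Real.volume_Ioc, smul_eq_mul,
    show θ - -θ = 2 * θ by ring]
  exact ENNReal.inv_mul_cancel (by simp [hθ]) ENNReal.ofReal_ne_top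

lemma unifSym_singleton (θ x : ℝ) : unifSym θ {x} = 0 := by
  simp [unifSym, Measure.restrict_apply (measurableSet_singleton x),
    measure_mono_null Set.inter_subset_left (Real.volume_singleton (a := x))]

lemma integral_exp_ofReal_mul_I_symm (θ : ℝ) :
    ∫ x in -θ..θ, cexp (x * I) = 2 * Real.sin θ := by
  simp_rw [mul_comm _ I]
  rw [integral_exp_mul_complex I_ne_zero, ofReal_sin, Complex.sin, ofReal_neg]
  field_simp
  linear_combination (cexp (I * θ) - cexp (-(I * θ))) * I_sq

lemma integral_exp_ofReal_mul_I_unifSym {θ : ℝ} (hθ : 0 < θ) :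
    ∫ x : ℝ, cexp (x * I) ∂unifSym θ = ((Real.sin θ / θ : ℝ) : ℂ) := by
  rw [unifSym, integral_smul_measure, ← intervalIntegral.integral_of_le (by linarith),
    integral_exp_ofReal_mul_I_symm, ENNReal.toReal_inv, ENNReal.toReal_ofReal (by linarith),
    real_smul]
  push_cast
  field_simp

section Polar

variable {Ω : Type*} [MeasurableSpace Ω] {P : Measure Ω}

lemma aemeasurable_of_map_eq_unifSym {X : Ω → ℝ} {θ : ℝ} (hθ : 0 < θ)
    (h : P.map X = unifSym θ) : AEMeasurable X P :=
  have := isProbabilityMeasure_unifSym hθ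
  aemeasurable_of_map_neZero (by rw [h]; infer_instance)

lemma ae_norm_pos_of_map_arg_eq_unifSym {f : Ω → ℂ} {θ : ℝ} (hθ : 0 < θ)
    (hph : P.map (fun ω => (f ω).arg) = unifSym θ) : ∀ᵐ ω ∂P, 0 < ‖f ω‖ := by
  have hnull : P ((fun ω => (f ω).arg) ⁻¹' {0}) = 0 := by
    rw [← Measure.map_apply_of_aemeasurable (aemeasurable_of_map_eq_unifSym hθ hph)
      (measurableSet_singleton 0), hph, unifSym_singleton]
  refine measure_mono_null (fun ω hω => ?_) hnull
  simp_all

lemma pow_ae_eq_exp_mul_log {A : Ω → ℝ} (hA : ∀ᵐ ω ∂P, 0 < A ω) (n : ℕ) :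
    (fun ω => A ω ^ n) =ᵐ[P] fun ω => Real.exp (n * Real.log (A ω)) := by
  filter_upwards [hA] with ω hω
  rw [Real.exp_nat_mul, Real.exp_log hω]

lemma integrable_pow_of_map_log_eq_gaussianReal {A : Ω → ℝ} {μ : ℝ} {v : NNReal}
    (hA : ∀ᵐ ω ∂P, 0 < A ω) (h : P.map (fun ω => Real.log (A ω)) = gaussianReal μ v) (n : ℕ) :
    Integrable (fun ω => A ω ^ n) P := by
  have : NeZero P := ⟨by rintro rfl; exact NeZero.ne _ (by simpa using h.symm)⟩
  refine Integrable.congr ?_ (pow_ae_eq_exp_mul_log hA n).symm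
  rw [← mgf_pos_iff, mgf_gaussianReal h]
  exact Real.exp_pos _

lemma integral_pow_of_map_log_eq_gaussianReal {A : Ω → ℝ} {μ : ℝ} {v : NNReal}
    (hA : ∀ᵐ ω ∂P, 0 < A ω) (h : P.map (fun ω => Real.log (A ω)) = gaussianReal μ v) (n : ℕ) :
    ∫ ω, A ω ^ n ∂P = Real.exp (μ * n + v * n ^ 2 / 2) := by
  rw [integral_congr_ae (pow_ae_eq_exp_mul_log hA n), ← mgf, mgf_gaussianReal h]

lemma aemeasurable_of_aemeasurable_norm_arg {f : Ω → ℂ} (hnorm : AEMeasurable (fun ω => ‖f ω‖) P)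
    (harg : AEMeasurable (fun ω => (f ω).arg) P) : AEMeasurable f P := by
  rw [show f = fun ω => ‖f ω‖ * cexp ((f ω).arg * I) from
    funext fun ω => (norm_mul_exp_arg_mul_I _).symm]
  fun_prop

lemma integral_norm_sub_mul_sq_of_indepFun {t r : Ω → ℂ} (htr : IndepFun t r P)
    (ht : MemLp t 2 P) (hr : MemLp r 2 P) (α : ℂ) :
    ∫ ω, ‖t ω - α * r ω‖ ^ 2 ∂P = ∫ ω, ‖t ω‖ ^ 2 ∂P + ‖α‖ ^ 2 * ∫ ω, ‖r ω‖ ^ 2 ∂P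
      - 2 * (conj α * (∫ ω, t ω ∂P) * conj (∫ ω, r ω ∂P)).re := by
  have hexpand : ∀ ω, ‖t ω - α * r ω‖ ^ 2
      = ‖t ω‖ ^ 2 + ‖α‖ ^ 2 * ‖r ω‖ ^ 2 - 2 * (conj α * (t ω * conj (r ω))).re := by
    intro ω
    simp only [Complex.sq_norm, normSq_sub, map_mul]
    ring_nf
  have ht2 := (memLp_two_iff_integrable_sq_norm ht.1).1 ht
  have hr2 := (memLp_two_iff_integrable_sq_norm hr.1).1 hr
  have hcross : Integrable (fun ω => t ω * conj (r ω)) P := ht.integrable_mul hr.star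
  have hEcross : ∫ ω, t ω * conj (r ω) ∂P = (∫ ω, t ω ∂P) * conj (∫ ω, r ω ∂P) := by
    rw [← integral_conj]
    exact (htr.comp measurable_id continuous_conj.measurable).integral_fun_mul_eq_mul_integral
      ht.1 hr.1.star
  have hsum : Integrable (fun ω => ‖t ω‖ ^ 2 + ‖α‖ ^ 2 * ‖r ω‖ ^ 2) P := ht2.add (hr2.const_mul _)
  have hre : Integrable (fun ω => 2 * (conj α * (t ω * conj (r ω))).re) P :=
    (hcross.const_mul _).re.const_mul 2
  have hre_comm : ∫ ω, (conj α * (t ω * conj (r ω))).re ∂P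
      = (∫ ω, conj α * (t ω * conj (r ω)) ∂P).re :=
    integral_re (hcross.const_mul _)
  simp_rw [hexpand]
  rw [integral_sub hsum hre, integral_add ht2 (hr2.const_mul _), integral_const_mul,
    integral_const_mul, hre_comm, integral_const_mul, hEcross, mul_assoc]

lemma memLp_two_of_map_log_norm_eq_gaussianReal {f : Ω → ℂ} {μ θ : ℝ} {v : NNReal} (hθ : 0 < θ)
    (hamp : P.map (fun ω => Real.log ‖f ω‖) = gaussianReal μ v)
    (hph : P.map (fun ω => (f ω).arg) = unifSym θ) : MemLp f 2 P := by
  have hpos := ae_norm_pos_of_map_arg_eq_unifSym hθ hph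
  have hnorm : AEMeasurable (fun ω => ‖f ω‖) P := by
    simpa using (integrable_pow_of_map_log_eq_gaussianReal hpos hamp 1).aemeasurable
  have hf := aemeasurable_of_aemeasurable_norm_arg hnorm (aemeasurable_of_map_eq_unifSym hθ hph)
  exact (memLp_two_iff_integrable_sq_norm hf.aestronglyMeasurable).2
    (integrable_pow_of_map_log_eq_gaussianReal hpos hamp 2)

lemma integral_eq_integral_norm_mul_integral_exp_arg {f : Ω → ℂ}
    (hind : IndepFun (fun ω => ‖f ω‖) (fun ω => (f ω).arg) P)
    (hnorm : AEMeasurable (fun ω => ‖f ω‖) P) (harg : AEMeasurable (fun ω => (f ω).arg) P) :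
    ∫ ω, f ω ∂P = (∫ ω, ‖f ω‖ ∂P : ℝ) * ∫ ω, cexp ((f ω).arg * I) ∂P := by
  rw [← integral_complex_ofReal]
  conv_lhs => enter [2, ω]; rw [← norm_mul_exp_arg_mul_I (f ω)]
  exact hind.integral_fun_comp_mul_comp hnorm harg (f := fun x : ℝ => (x : ℂ))
    (g := fun x : ℝ => cexp (x * I)) (by fun_prop) (by fun_prop)

lemma integral_of_map_log_norm_eq_gaussianReal {f : Ω → ℂ} {μ θ : ℝ} {v : NNReal} (hθ : 0 < θ)
    (hamp : P.map (fun ω => Real.log ‖f ω‖) = gaussianReal μ v)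
    (hph : P.map (fun ω => (f ω).arg) = unifSym θ)
    (hind : IndepFun (fun ω => ‖f ω‖) (fun ω => (f ω).arg) P) :
    ∫ ω, f ω ∂P = (Real.exp (μ + v / 2) * (Real.sin θ / θ) : ℝ) := by
  have hpos := ae_norm_pos_of_map_arg_eq_unifSym hθ hph
  have hint := integrable_pow_of_map_log_eq_gaussianReal hpos hamp 1
  have hmean := integral_pow_of_map_log_eq_gaussianReal hpos hamp 1
  have harg := aemeasurable_of_map_eq_unifSym hθ hph
  simp only [pow_one, Nat.cast_one, mul_one, one_pow] at hint hmean
  rw [integral_eq_integral_norm_mul_integral_exp_arg hind hint.aemeasurable harg, hmean,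
    ← integral_map harg (f := fun x : ℝ => cexp (x * I)) (by fun_prop), hph,
    integral_exp_ofReal_mul_I_unifSym hθ, ofReal_mul]

end Polar

theorem stmt5_general {Ω : Type*} [MeasurableSpace Ω] (P : Measure Ω)
    (vt vr : NNReal) (θt θr : ℝ) (hθt : 0 < θt)
    (hθr : 0 < θr) (t r : Ω → ℂ)
    (htr : IndepFun t r P)
    (htamp : Measure.map (fun ω => Real.log (‖t ω‖)) P = gaussianReal 0 vt)
    (htph : Measure.map (fun ω => Complex.arg (t ω)) P = unifSym θt)
    (htind : IndepFun (fun ω => ‖t ω‖) (fun ω => Complex.arg (t ω)) P)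
    (hramp : Measure.map (fun ω => Real.log (‖r ω‖)) P = gaussianReal 0 vr)
    (hrph : Measure.map (fun ω => Complex.arg (r ω)) P = unifSym θr)
    (hrind : IndepFun (fun ω => ‖r ω‖) (fun ω => Complex.arg (r ω)) P) :
    (∀ α : ℂ,
      (∫ ω, ‖t ω - α * r ω‖ ^ 2 ∂P) =
        Real.exp (2 * (vt : ℝ)) + ‖α‖ ^ 2 * Real.exp (2 * (vr : ℝ))
          - 2 * α.re * (Real.sin θt / θt) * (Real.sin θr / θr)
            * Real.exp (((vt : ℝ) + (vr : ℝ)) / 2)) ∧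
    (∫ ω, ‖t ω -
        ((Real.sin θt / θt) * (Real.sin θr / θr)
          * Real.exp (((vt : ℝ) + (vr : ℝ)) / 2) : ℝ) * r ω‖ ^ 2 ∂P) =
      Real.exp (2 * (vt : ℝ)) + (Real.sin θt / θt) ^ 2 * (Real.sin θr / θr) ^ 2
        * Real.exp ((vt : ℝ) + (vr : ℝ)) * (Real.exp (2 * (vr : ℝ)) - 2) := by
  have hEt2 := integral_pow_of_map_log_eq_gaussianReal
    (ae_norm_pos_of_map_arg_eq_unifSym hθt htph) htamp 2
  have hEr2 := integral_pow_of_map_log_eq_gaussianReal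
    (ae_norm_pos_of_map_arg_eq_unifSym hθr hrph) hramp 2
  have hEt := integral_of_map_log_norm_eq_gaussianReal hθt htamp htph htind
  have hEr := integral_of_map_log_norm_eq_gaussianReal hθr hramp hrph hrind
  have hexp : Real.exp ((vt + vr : ℝ) / 2) = Real.exp (vt / 2) * Real.exp (vr / 2) := by
    rw [← Real.exp_add, add_div]
  have main : ∀ α : ℂ, ∫ ω, ‖t ω - α * r ω‖ ^ 2 ∂P = Real.exp (2 * (vt : ℝ))
      + ‖α‖ ^ 2 * Real.exp (2 * (vr : ℝ)) - 2 * α.re * (Real.sin θt / θt) * (Real.sin θr / θr)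
        * Real.exp (((vt : ℝ) + (vr : ℝ)) / 2) := by
    intro α
    rw [integral_norm_sub_mul_sq_of_indepFun htr
      (memLp_two_of_map_log_norm_eq_gaussianReal hθt htamp htph)
      (memLp_two_of_map_log_norm_eq_gaussianReal hθr hramp hrph) α, hEt, hEr, hEt2, hEr2,
      conj_ofReal, re_mul_ofReal, re_mul_ofReal, conj_re, hexp]
    ring_nf
  refine ⟨main, ?_⟩
  have hsq : Real.exp ((vt + vr : ℝ) / 2) ^ 2 = Real.exp (vt + vr) := by
    rw [← Real.exp_nat_mul]
    ring_nf
  rw [main, norm_real, ofReal_re, Real.norm_eq_abs, sq_abs, ← hsq]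
  ring

/-- Mismatch interference power: for independent `t, r` with log-normal amplitudes and
independent uniform phases, `E[|t − α r|²] = e^{2δ_t²} + |α|²e^{2δ_r²} −
2·Re(α*)·sinc(θ_t)sinc(θ_r)e^{(δ_t²+δ_r²)/2}` for every complex `α`; in particular with
`α = sinc(θ_t)sinc(θ_r)e^{(δ_t²+δ_r²)/2}` it equals
`e^{2δ_t²} + sinc²(θ_t)sinc²(θ_r)e^{δ_t²+δ_r²}(e^{2δ_r²} − 2)`. -/
theorem stmt5 {Ω : Type*} [MeasurableSpace Ω] (P : Measure Ω) [IsProbabilityMeasure P]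
    (vt vr : NNReal) (θt θr : ℝ) (hθt : 0 < θt) (hθtπ : θt ≤ Real.pi)
    (hθr : 0 < θr) (hθrπ : θr ≤ Real.pi) (t r : Ω → ℂ)
    (htr : IndepFun t r P)
    (htamp : Measure.map (fun ω => Real.log (‖t ω‖)) P = gaussianReal 0 vt)
    (htph : Measure.map (fun ω => Complex.arg (t ω)) P = unifSym θt)
    (htind : IndepFun (fun ω => ‖t ω‖) (fun ω => Complex.arg (t ω)) P)
    (hramp : Measure.map (fun ω => Real.log (‖r ω‖)) P = gaussianReal 0 vr)
    (hrph : Measure.map (fun ω => Complex.arg (r ω)) P = unifSym θr)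
    (hrind : IndepFun (fun ω => ‖r ω‖) (fun ω => Complex.arg (r ω)) P) :
    (∀ α : ℂ,
      (∫ ω, ‖t ω - α * r ω‖ ^ 2 ∂P) =
        Real.exp (2 * (vt : ℝ)) + ‖α‖ ^ 2 * Real.exp (2 * (vr : ℝ))
          - 2 * α.re * (Real.sin θt / θt) * (Real.sin θr / θr)
            * Real.exp (((vt : ℝ) + (vr : ℝ)) / 2)) ∧
    (∫ ω, ‖t ω -
        ((Real.sin θt / θt) * (Real.sin θr / θr)
          * Real.exp (((vt : ℝ) + (vr : ℝ)) / 2) : ℝ) * r ω‖ ^ 2 ∂P) =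
      Real.exp (2 * (vt : ℝ)) + (Real.sin θt / θt) ^ 2 * (Real.sin θr / θr) ^ 2
        * Real.exp ((vt : ℝ) + (vr : ℝ)) * (Real.exp (2 * (vr : ℝ)) - 2) :=
  stmt5_general P vt vr θt θr hθt hθr t r htr htamp htph htind hramp hrph hrind
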